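/- Let Γ be a finite group acting on a root system Φ in a ℚ-vector space V (permuting roots, preserving the pairing with coroots), and let Ψ = Γ·α̃ be a Γ-orbit of mutually orthogonal roots. Suppose α ∈ V^Γ satisfies ∑_{β∈Ψ} β = |Ψ|·α and set α∨ := ∑_{β∈Ψ} β∨. Then for every Γ-fixed vector v ∈ V^Γ, the element w̃ = ∏_{β∈Ψ} w_β acts on v by w̃(v) = v − ⟨v, α∨⟩ α, i.e., w̃ restricted to V^Γ coincides with the reflection through α. -/
import Mathlib


/-- Let `Ψ` be a `Γ`-orbit of mutually orthogonal roots, `α` a `Γ`-fixed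
vector with `∑_{β∈Ψ} β = |Ψ|·α`, and `α∨ = ∑_{β∈Ψ} β∨`.  Then on `Γ`-fixed
vectors, the product `w̃` of the reflections through the roots of `Ψ` acts as
the reflection through `α`: `w̃(v) = v - ⟨v, α∨⟩ α`. -/
theorem orbit_reflection_product_acts_as_reflection
    {ι V W : Type*} [AddCommGroup V] [Module ℚ V] [AddCommGroup W] [Module ℚ W]
    {Γ : Type*} [Group Γ] [Fintype Γ]
    (ρV : Representation ℚ Γ V) (ρW : Representation ℚ Γ W)
    (B : V →ₗ[ℚ] W →ₗ[ℚ] ℚ)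
    (hinv : ∀ (γ : Γ) v w, B (ρV γ v) (ρW γ w) = B v w)
    (r : ι → V) (co : ι → W) (Ψ : Finset ι)
    (horb : ∀ i ∈ Ψ, ∀ j ∈ Ψ, ∃ γ : Γ, ρV γ (r i) = r j ∧ ρW γ (co i) = co j)
    (horth : ∀ i ∈ Ψ, ∀ j ∈ Ψ, i ≠ j → B (r i) (co j) = 0)
    (α : V) (hα : ∀ γ : Γ, ρV γ α = α)
    (hsum : ∑ i ∈ Ψ, r i = (Ψ.card : ℚ) • α)
    (αco : W) (hαco : αco = ∑ i ∈ Ψ, co i)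
    (hpair : B α αco = 2)
    (wt : Module.End ℚ V)
    (hwt : ∀ v : V, wt v = v - ∑ i ∈ Ψ, B v (co i) • r i) :
    ∀ v : V, (∀ γ : Γ, ρV γ v = v) → wt v = v - B v αco • α := by
  intro v hv
  rcases Ψ.eq_empty_or_nonempty with h | ⟨i0, hi0⟩
  · simp [hwt, h, hαco]
  · have key : ∀ j ∈ Ψ, B v (co j) = B v (co i0) := by
      intro j hj
      obtain ⟨γ, hγr, hγc⟩ := horb i0 hi0 j hj
      rw [← hγc, ← hinv γ v (co i0), hv]
    rw [hwt, hαco]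
    have h1 : ∑ i ∈ Ψ, B v (co i) • r i = B v (co i0) • ∑ i ∈ Ψ, r i := by
      rw [Finset.smul_sum]
      exact Finset.sum_congr rfl fun j hj => by rw [key j hj]
    rw [h1, hsum, map_sum]
    have h2 : ∑ i ∈ Ψ, B v (co i) = (Ψ.card : ℚ) * B v (co i0) := by
      rw [Finset.sum_congr rfl key, Finset.sum_const, nsmul_eq_mul]
    rw [h2, smul_smul, mul_comm]
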